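/- Let x' be a 0–1 sequence with associated real x, let p ≥ 1, and assume x'(i) = 0 for some i > p. If there exists a real number y which is (p−1)-rational and satisfies 0 < x − y < 1/2^p, then x'(p) = 0. -/

import Mathlib

/-- `x'` is a 0–1 sequence: defined on positive integers with values in {0,1}. -/
def IsZeroOne (x' : ℕ → ℕ) : Prop := ∀ i, 1 ≤ i → x' i = 0 ∨ x' i = 1

/-- The real number associated to a 0–1 sequence: `Σ_{i=1}^∞ x'(i)·2^{-i}`. -/
noncomputable def assocReal (x' : ℕ → ℕ) : ℝ := ∑' i : ℕ, (x' (i + 1) : ℝ) / 2 ^ (i + 1)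

/-- A real `y` is `p`-rational if `y·2^p` is a natural number. -/
def IsPRational (p : ℕ) (y : ℝ) : Prop := ∃ q : ℕ, y * 2 ^ p = (q : ℝ)

/-!
Split `2^p x` into the integer `x'(1) x'(2) … x'(p)` read in binary and the tail
`0.x'(p+1) x'(p+2) …`, which lies in `[0, 1)` because some later digit is `0`.
Since `y 2^p` is even and `0 < (x - y) 2^p < 1`, the integer part of `2^p x` is `y 2^p`;
hence it is even, and its last binary digit `x'(p)` vanishes.
-/

def binaryPrefix (x' : ℕ → ℕ) : ℕ → ℕ
  | 0 => 0
  | n + 1 => 2 * binaryPrefix x' n + x' (n + 1)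

namespace IsZeroOne

variable {x' : ℕ → ℕ}

theorem comp_add_right (h : IsZeroOne x') (n : ℕ) : IsZeroOne (fun i => x' (i + n)) :=
  fun i hi => h (i + n) (by omega)

theorem digit_div_le (h : IsZeroOne x') (i : ℕ) :
    (x' (i + 1) : ℝ) / 2 ^ (i + 1) ≤ 1 / 2 / 2 ^ i := by
  rw [div_div, ← pow_succ']
  gcongr
  rcases h (i + 1) (by omega) with h0 | h1 <;> simp [*]

theorem summable (h : IsZeroOne x') :
    Summable (fun i : ℕ => (x' (i + 1) : ℝ) / 2 ^ (i + 1)) :=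
  .of_nonneg_of_le (fun _ => by positivity) h.digit_div_le (hasSum_geometric_two' 1).summable

theorem assocReal_lt_one (h : IsZeroOne x') {i : ℕ} (hi : 1 ≤ i) (hzero : x' i = 0) :
    assocReal x' < 1 := by
  obtain ⟨j, rfl⟩ : ∃ j, i = j + 1 := ⟨i - 1, by omega⟩
  calc assocReal x' < ∑' n : ℕ, (1 : ℝ) / 2 / 2 ^ n :=
        h.summable.tsum_lt_tsum (i := j) h.digit_div_le (by simp [hzero])
          (hasSum_geometric_two' 1).summable
    _ = 1 := tsum_geometric_two' 1

theorem assocReal_mul_two (h : IsZeroOne x') :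
    assocReal x' * 2 = x' 1 + assocReal (fun i => x' (i + 1)) := by
  rw [assocReal, h.summable.tsum_eq_zero_add, assocReal, add_mul, ← tsum_mul_right]
  congr 1
  · ring
  · exact tsum_congr fun i => by rw [pow_succ]; field_simp

theorem assocReal_mul_two_pow (h : IsZeroOne x') (n : ℕ) :
    assocReal x' * 2 ^ n = binaryPrefix x' n + assocReal (fun i => x' (i + n)) := by
  induction n with
  | zero => simp [binaryPrefix]
  | succ n ih =>
    have hstep := (h.comp_add_right n).assocReal_mul_two
    simp only [add_comm 1 n, add_assoc] at hstep
    rw [pow_succ, ← mul_assoc, ih, add_mul, hstep, binaryPrefix]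
    push_cast
    ring

end IsZeroOne

theorem assocReal_nonneg (x' : ℕ → ℕ) : 0 ≤ assocReal x' :=
  tsum_nonneg fun _ => by positivity

/-- If `x'(i) = 0` for some `i > p` and there is a `(p-1)`-rational `y` with
`0 < x - y < 1/2^p`, then `x'(p) = 0`. -/
theorem stmt5 (x' : ℕ → ℕ) (hx' : IsZeroOne x') (x : ℝ) (hx : x = assocReal x')
    (p : ℕ) (hp : 1 ≤ p) (hsome : ∃ i, p < i ∧ x' i = 0)
    (hy : ∃ y : ℝ, IsPRational (p - 1) y ∧ 0 < x - y ∧ x - y < 1 / 2 ^ p) :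
    x' p = 0 := by
  obtain ⟨k, rfl⟩ : ∃ k, p = k + 1 := ⟨p - 1, by omega⟩
  obtain ⟨y, ⟨q, hq⟩, hpos, hlt⟩ := hy
  obtain ⟨i, hi, hzero⟩ := hsome
  have htail_nonneg := assocReal_nonneg (fun j => x' (j + (k + 1)))
  have htail_lt_one := (hx'.comp_add_right (k + 1)).assocReal_lt_one
    (i := i - (k + 1)) (by omega) (by simp only [Nat.sub_add_cancel hi.le, hzero])
  have hsplit := hx ▸ hx'.assocReal_mul_two_pow (k + 1)
  have hy_even : y * 2 ^ (k + 1) = 2 * q := by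
    rw [Nat.add_sub_cancel] at hq
    rw [pow_succ, ← mul_assoc, hq, mul_comm]
  have hgap_pos : 0 < (x - y) * 2 ^ (k + 1) := mul_pos hpos (by positivity)
  have hgap_lt_one : (x - y) * 2 ^ (k + 1) < 1 := (lt_div_iff₀ (by positivity)).mp hlt
  have hprefix : binaryPrefix x' (k + 1) = 2 * q := by
    have hupper : (binaryPrefix x' (k + 1) : ℝ) < 2 * q + 1 := by linarith
    have hlower : (2 * q : ℝ) < binaryPrefix x' (k + 1) + 1 := by linarith
    have : binaryPrefix x' (k + 1) < 2 * q + 1 := by exact_mod_cast hupper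
    have : 2 * q < binaryPrefix x' (k + 1) + 1 := by exact_mod_cast hlower
    omega
  rw [binaryPrefix] at hprefix
  rcases hx' (k + 1) hp with hdigit | hdigit <;> omega
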